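/- Let G be a simple graph, let s ≥ 2 be a window size with (s + 1 : ℕ∞) < girth(G), and let W = (w_0, …, w_ℓ) be a non-backtracking walk in G. Then all equality indicators of the window-s structural feature of W are 0 (i.e., w_i ≠ w_{i−j} whenever 1 ≤ j ≤ s and i − j ≥ 0), and all adjacency indicators with gap at least 2 are 0 (i.e., w_i is not adjacent to w_{i−j} whenever 2 ≤ j ≤ s and i − j ≥ 0). In particular, any two non-backtracking walks of the same length ℓ in simple graphs of girth greater than s + 1 have identical window-s structural features. -/

import Mathlib

/-!
A non-backtracking walk that is shorter than the girth is a path: were a vertex to repeat, the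
first repetition would close up either a cycle shorter than the girth or, when it has length 2,
a backtrack. Hence any window of at most `s` steps of a non-backtracking walk is a path, so its
endpoints differ, and joining them by an edge would produce a cycle of length at most `s + 1`.
All indicators in question therefore vanish, whatever the graph and the walk.
-/

namespace SimpleGraph.Walk

variable {V : Type*} {G : SimpleGraph V} {u v : V}

def IsNonBacktracking (W : G.Walk u v) : Prop :=
  ∀ i, i + 2 ≤ W.length → W.getVert (i + 2) ≠ W.getVert i

theorem isNonBacktracking_iff {W : G.Walk u v} : W.IsNonBacktracking ↔
    ∀ i : ℕ, 1 ≤ i → i + 1 ≤ W.length → W.getVert (i + 1) ≠ W.getVert (i - 1) := by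
  refine ⟨fun hW i hi hil => ?_, fun hW i hil => ?_⟩
  · obtain ⟨k, rfl⟩ := Nat.exists_eq_add_of_le' hi
    exact hW k hil
  · exact hW (i + 1) (by omega) hil

theorem IsNonBacktracking.of_cons {w : V} {h : G.Adj u v} {p : G.Walk v w}
    (hW : (cons h p).IsNonBacktracking) : p.IsNonBacktracking :=
  fun i hi => hW (i + 1) (by rw [length_cons]; omega)

theorem IsNonBacktracking.drop {W : G.Walk u v} (hW : W.IsNonBacktracking) (n : ℕ) :
    (W.drop n).IsNonBacktracking := fun i hi => by
  rw [drop_length] at hi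
  simpa only [drop_getVert, ← add_assoc] using hW (n + i) (by omega)

theorem IsNonBacktracking.take {W : G.Walk u v} (hW : W.IsNonBacktracking) (n : ℕ) :
    (W.take n).IsNonBacktracking := fun i hi => by
  rw [take_length] at hi
  simpa only [take_getVert, Nat.min_eq_right (by omega : i + 2 ≤ n),
    Nat.min_eq_right (by omega : i ≤ n)] using hW i (by omega)

theorem IsNonBacktracking.isPath_of_length_lt_egirth {W : G.Walk u v}
    (hW : W.IsNonBacktracking) (hlen : (W.length : ℕ∞) < G.egirth) : W.IsPath := by
  classical
  induction W with
  | nil => exact .nil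
  | @cons u v w h p ih =>
    rw [length_cons] at hlen
    have hp : p.IsPath := ih hW.of_cons (lt_of_le_of_lt (by norm_cast; omega) hlen)
    refine (cons_isPath_iff h p).mpr ⟨hp, fun hu => ?_⟩
    set q := p.takeUntil u hu
    have hqp : q.length ≤ p.length := p.length_takeUntil_le_length hu
    by_cases hq : 2 ≤ q.length
    · have hc : (cons h q).IsCycle :=
        isCycle_iff_isPath_tail_and_le_length.mpr ⟨by simpa using hp.takeUntil hu, by simpa⟩
      exact ((egirth_le_length hc).trans_lt (lt_of_le_of_lt (by simpa using hqp) hlen)).false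
    · have hq1 : q.length = 1 := by
        have : q.length ≠ 0 := fun h0 => h.ne (eq_of_length_eq_zero h0).symm
        omega
      have hback : p.getVert 1 = u := by
        rw [← getVert_takeUntil (n := 1) hu hq1.ge, ← hq1, getVert_length]
      exact hW 0 (by rw [length_cons]; omega) hback

theorem IsNonBacktracking.isPath_take_drop {W : G.Walk u v} (hW : W.IsNonBacktracking)
    (i : ℕ) {j : ℕ} (hj : (j : ℕ∞) < G.egirth) : ((W.drop i).take j).IsPath :=
  ((hW.drop i).take j).isPath_of_length_lt_egirth <|
    lt_of_le_of_lt (by rw [take_length]; exact_mod_cast min_le_left _ _) hj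

theorem IsNonBacktracking.getVert_add_ne {W : G.Walk u v} (hW : W.IsNonBacktracking) {i j : ℕ}
    (hij : i + j ≤ W.length) (hj : 1 ≤ j) (hjg : (j : ℕ∞) < G.egirth) :
    W.getVert (i + j) ≠ W.getVert i := fun heq => by
  have hlen : ((W.drop i).take j).length = j := by rw [take_length, drop_length]; omega
  have hj0 : j = 0 := (hW.isPath_take_drop i hjg).getVert_injOn
    (show j ≤ _ by omega) (show 0 ≤ _ by omega)
    (by simpa [take_getVert, drop_getVert] using heq)
  omega

theorem IsNonBacktracking.not_adj_getVert_add {W : G.Walk u v} (hW : W.IsNonBacktracking)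
    {i j : ℕ} (hij : i + j ≤ W.length) (hj : 2 ≤ j) (hjg : (j + 1 : ℕ∞) < G.egirth) :
    ¬ G.Adj (W.getVert (i + j)) (W.getVert i) := fun hadj => by
  set P := (W.drop i).take j
  have hlen : P.length = j := by rw [take_length, drop_length]; omega
  rw [← drop_getVert] at hadj
  have hc : (cons hadj P).IsCycle := isCycle_iff_isPath_tail_and_le_length.mpr
    ⟨by simpa using hW.isPath_take_drop i (lt_of_le_of_lt (by norm_cast; omega) hjg),
      by rw [length_cons]; omega⟩
  exact ((egirth_le_length hc).trans_lt (by rwa [length_cons, hlen])).false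

theorem IsNonBacktracking.window_feature_trivial {W : G.Walk u v} (hW : W.IsNonBacktracking)
    {s : ℕ} (hgirth : ((s + 1 : ℕ) : ℕ∞) < G.egirth) :
    (∀ i j : ℕ, i ≤ W.length → 1 ≤ j → j ≤ s → j ≤ i →
      W.getVert i ≠ W.getVert (i - j)) ∧
    (∀ i j : ℕ, i ≤ W.length → 2 ≤ j → j ≤ s → j ≤ i →
      ¬ G.Adj (W.getVert i) (W.getVert (i - j))) := by
  refine ⟨fun i j hi hj hjs hji => ?_, fun i j hi hj hjs hji => ?_⟩
  · obtain ⟨k, rfl⟩ := Nat.exists_eq_add_of_le' hji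
    simpa using hW.getVert_add_ne hi hj (lt_of_le_of_lt (by norm_cast; omega) hgirth)
  · obtain ⟨k, rfl⟩ := Nat.exists_eq_add_of_le' hji
    simpa using hW.not_adj_getVert_add hi hj (lt_of_le_of_lt (by norm_cast; omega) hgirth)

end SimpleGraph.Walk

theorem nonbacktracking_window_feature_trivial_general {V : Type*} (G : SimpleGraph V)
    (s : ℕ) (hgirth : ((s + 1 : ℕ) : ℕ∞) < G.egirth)
    {u v : V} (W : G.Walk u v)
    (hnb : ∀ i : ℕ, 1 ≤ i → i + 1 ≤ W.length → W.getVert (i + 1) ≠ W.getVert (i - 1)) :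
    ((∀ i j : ℕ, i ≤ W.length → 1 ≤ j → j ≤ s → j ≤ i →
        W.getVert i ≠ W.getVert (i - j)) ∧
     (∀ i j : ℕ, i ≤ W.length → 2 ≤ j → j ≤ s → j ≤ i →
        ¬ G.Adj (W.getVert i) (W.getVert (i - j)))) ∧
    (∀ (V' : Type*) (G' : SimpleGraph V') (u' v' : V') (W' : G'.Walk u' v'),
      ((s + 1 : ℕ) : ℕ∞) < G'.egirth →
      (∀ i : ℕ, 1 ≤ i → i + 1 ≤ W'.length → W'.getVert (i + 1) ≠ W'.getVert (i - 1)) →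
      W'.length = W.length →
      (∀ i j : ℕ, i ≤ W.length → 1 ≤ j → j ≤ s → j ≤ i →
        (W.getVert i = W.getVert (i - j) ↔ W'.getVert i = W'.getVert (i - j))) ∧
      (∀ i j : ℕ, i ≤ W.length → 2 ≤ j → j ≤ s → j ≤ i →
        (G.Adj (W.getVert i) (W.getVert (i - j)) ↔
          G'.Adj (W'.getVert i) (W'.getVert (i - j))))) := by
  obtain ⟨hne, hnadj⟩ :=
    (SimpleGraph.Walk.isNonBacktracking_iff.mpr hnb).window_feature_trivial hgirth
  refine ⟨⟨hne, hnadj⟩, fun V' G' u' v' W' hgirth' hnb' hlen => ?_⟩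
  obtain ⟨hne', hnadj'⟩ :=
    (SimpleGraph.Walk.isNonBacktracking_iff.mpr hnb').window_feature_trivial hgirth'
  exact ⟨fun i j hi hj hjs hji =>
      iff_of_false (hne i j hi hj hjs hji) (hne' i j (hlen ▸ hi) hj hjs hji),
    fun i j hi hj hjs hji =>
      iff_of_false (hnadj i j hi hj hjs hji) (hnadj' i j (hlen ▸ hi) hj hjs hji)⟩

/-- If `s ≥ 2` and `s + 1 < girth G`, then on a non-backtracking walk
`W` in `G` all equality indicators of the window-`s` structural feature are `0`
(`w_i ≠ w_{i-j}` for `1 ≤ j ≤ s`, `j ≤ i`) and all adjacency indicators with gap at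
least `2` are `0` (`w_i` not adjacent to `w_{i-j}` for `2 ≤ j ≤ s`, `j ≤ i`).
In particular, any two non-backtracking walks of the same length in simple graphs of
girth greater than `s + 1` have identical window-`s` structural features. -/
theorem nonbacktracking_window_feature_trivial {V : Type*} (G : SimpleGraph V)
    (s : ℕ) (hs : 2 ≤ s) (hgirth : ((s + 1 : ℕ) : ℕ∞) < G.egirth)
    {u v : V} (W : G.Walk u v)
    (hnb : ∀ i : ℕ, 1 ≤ i → i + 1 ≤ W.length → W.getVert (i + 1) ≠ W.getVert (i - 1)) :
    ((∀ i j : ℕ, i ≤ W.length → 1 ≤ j → j ≤ s → j ≤ i →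
        W.getVert i ≠ W.getVert (i - j)) ∧
     (∀ i j : ℕ, i ≤ W.length → 2 ≤ j → j ≤ s → j ≤ i →
        ¬ G.Adj (W.getVert i) (W.getVert (i - j)))) ∧
    (∀ (V' : Type*) (G' : SimpleGraph V') (u' v' : V') (W' : G'.Walk u' v'),
      ((s + 1 : ℕ) : ℕ∞) < G'.egirth →
      (∀ i : ℕ, 1 ≤ i → i + 1 ≤ W'.length → W'.getVert (i + 1) ≠ W'.getVert (i - 1)) →
      W'.length = W.length →
      (∀ i j : ℕ, i ≤ W.length → 1 ≤ j → j ≤ s → j ≤ i →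
        (W.getVert i = W.getVert (i - j) ↔ W'.getVert i = W'.getVert (i - j))) ∧
      (∀ i j : ℕ, i ≤ W.length → 2 ≤ j → j ≤ s → j ≤ i →
        (G.Adj (W.getVert i) (W.getVert (i - j)) ↔
          G'.Adj (W'.getVert i) (W'.getVert (i - j))))) :=
  nonbacktracking_window_feature_trivial_general G s hgirth W hnb
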